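/- arXiv:0710.2096 — 2 statements merged into one kernel-verified Lean document; each statement's English description precedes it below -/
import Mathlib

section
/- Let u be a tempered distribution on ℝ, let φ ∈ 𝓢(ℝ) be a Schwartz function, and let K ⊆ ℝ be a compact set. Then there exist N ∈ ℕ and C > 0 such that for all ε ∈ (0, 1] and all x ∈ K, |u(y ↦ ε⁻¹ φ((y − x)/ε))| ≤ C ε^{−N}. (Moderateness of the embedded distribution: the embedding ι(u) evaluated on scaled translated test objects grows at most polynomially in 1/ε, uniformly on compact sets.) -/
open MeasureTheory SchwartzMap

/-- An affine map `y ↦ a * y + b` on `ℝ` has temperate growth. -/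
lemma hasTemperateGrowth_affine (a b : ℝ) :
    Function.HasTemperateGrowth (fun y : ℝ => a * y + b) := by
  apply Function.HasTemperateGrowth.of_fderiv (k := 1) (C := |a| + |b|)
  · have h : (fderiv ℝ fun y : ℝ => a * y + b) =
        fun _ : ℝ => ContinuousLinearMap.smulRight (1 : ℝ →L[ℝ] ℝ) a := by
      funext y
      have := (((hasDerivAt_id y).const_mul a).add_const b).hasFDerivAt.fderiv
      exact this.trans (by ext; simp)
    rw [h]
    exact .const _
  · exact fun y => (((hasDerivAt_id y).const_mul a).add_const b).differentiableAt
  · intro y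
    have h1 : ‖a * y + b‖ ≤ |a| * |y| + |b| := by
      simpa [abs_mul] using abs_add_le (a * y) b
    have h2 : (0:ℝ) ≤ |y| := abs_nonneg y
    have h3 : (0:ℝ) ≤ |a| := abs_nonneg a
    have h4 : (0:ℝ) ≤ |b| := abs_nonneg b
    calc ‖a * y + b‖ ≤ |a| * |y| + |b| := h1
      _ ≤ (|a| + |b|) * (1 + ‖y‖) ^ 1 := by
          simp only [pow_one, Real.norm_eq_abs]; nlinarith

/-- The scaled translated test function `y ↦ ε⁻¹ * φ ((y - x) / ε)` as a Schwartz function,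
for `ε > 0`. -/
noncomputable def scaledTranslate (φ : 𝓢(ℝ, ℝ)) (x ε : ℝ) (hε : 0 < ε) : 𝓢(ℝ, ℝ) :=
  ε⁻¹ • (SchwartzMap.compCLM ℝ (g := fun y : ℝ => (y - x) / ε)
    (by
      have heq : (fun y : ℝ => (y - x) / ε) = fun y : ℝ => ε⁻¹ * y + (-(x * ε⁻¹)) := by
        funext y; ring
      rw [heq]; exact hasTemperateGrowth_affine _ _)
    (⟨1, |x| + ε, fun y => by
      have h1 : |y| ≤ |x| + |y - x| := by
        calc |y| = |x + (y - x)| := by ring_nf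
          _ ≤ |x| + |y - x| := abs_add_le _ _
      have h2 : |y - x| = ε * |(y - x) / ε| := by
        rw [abs_div, abs_of_pos hε]; field_simp
      have h3 : (0:ℝ) ≤ |(y - x) / ε| := abs_nonneg _
      have h4 : (0:ℝ) ≤ |x| := abs_nonneg _
      simp only [Real.norm_eq_abs, pow_one]
      nlinarith⟩) φ)

@[simp] lemma scaledTranslate_apply (φ : 𝓢(ℝ, ℝ)) (x ε : ℝ) (hε : 0 < ε) (y : ℝ) :
    scaledTranslate φ x ε hε y = ε⁻¹ * φ ((y - x) / ε) := rfl

/-!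
A tempered distribution is bounded by a constant times finitely many Schwartz seminorms
`sup_{y} |y|^k |ψ^{(n)}(y)|` with `k ≤ m₁`, `n ≤ m₂`. For `ψ = ε⁻¹ φ((· - x)/ε)` one has
`ψ^{(n)}(y) = ε^{-(n+1)} φ^{(n)}(z)` with `z = (y - x)/ε`, and for `|x| ≤ R`, `ε ≤ 1` the weight
`|y| = |x + εz|` is at most `(1 + R)(1 + |z|)`. Hence every such seminorm of `ψ` is
`O(ε^{-(m₂+1)})` uniformly in `x ∈ K`, and `N = m₂ + 1` works.
-/

namespace SchwartzMap

theorem exists_norm_apply_le_sup_seminorm {E F G : Type*}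
    [NormedAddCommGroup E] [NormedSpace ℝ E] [NormedAddCommGroup F] [NormedSpace ℝ F]
    [NormedAddCommGroup G] [NormedSpace ℝ G] (u : 𝓢(E, F) →L[ℝ] G) :
    ∃ (m : ℕ × ℕ) (C : ℝ), 0 < C ∧
      ∀ f, ‖u f‖ ≤ C * (Finset.Iic m).sup (schwartzSeminormFamily ℝ E F) f := by
  obtain ⟨s, C, hC, hbound⟩ := Seminorm.bound_of_continuous (schwartz_withSeminorms ℝ E F)
    ((normSeminorm ℝ G).comp u.toLinearMap) (continuous_norm.comp u.continuous)
  have hs : s ⊆ Finset.Iic (s.sup Prod.fst, s.sup Prod.snd) := fun i hi =>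
    Finset.mem_Iic.mpr ⟨Finset.le_sup (f := Prod.fst) hi, Finset.le_sup (f := Prod.snd) hi⟩
  refine ⟨(s.sup Prod.fst, s.sup Prod.snd), C, NNReal.coe_pos.mpr (pos_iff_ne_zero.mpr hC),
    fun f => (hbound f).trans ?_⟩
  exact mul_le_mul_of_nonneg_left
    (Finset.sup_mono (f := schwartzSeminormFamily ℝ E F) hs f) C.coe_nonneg

end SchwartzMap

theorem iteratedDeriv_comp_sub_div_const {𝕜 F : Type*} [NontriviallyNormedField 𝕜]
    [NormedAddCommGroup F] [NormedSpace 𝕜 F] {n : ℕ} {f : 𝕜 → F} (hf : ContDiff 𝕜 n f)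
    (x ε : 𝕜) :
    iteratedDeriv n (fun y => f ((y - x) / ε)) =
      fun y => (ε⁻¹ ^ n) • iteratedDeriv n f ((y - x) / ε) := by
  simp only [div_eq_inv_mul]
  rw [iteratedDeriv_comp_sub_const n (fun z => f (ε⁻¹ * z)) x, iteratedDeriv_comp_const_smul hf]

theorem iteratedDeriv_scaledTranslate (φ : 𝓢(ℝ, ℝ)) (x ε : ℝ) (hε : 0 < ε) (n : ℕ) (y : ℝ) :
    iteratedDeriv n (scaledTranslate φ x ε hε) y =
      ε⁻¹ ^ (n + 1) * iteratedDeriv n φ ((y - x) / ε) := by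
  have : ⇑(scaledTranslate φ x ε hε) = fun y => ε⁻¹ * φ ((y - x) / ε) := rfl
  rw [this, iteratedDeriv_const_mul_field, iteratedDeriv_comp_sub_div_const (φ.smooth n)]
  dsimp only
  rw [smul_eq_mul, pow_succ', mul_assoc]

theorem abs_le_mul_one_add_abs_sub_div {x y ε R : ℝ} (hε : 0 < ε) (hε1 : ε ≤ 1) (hx : |x| ≤ R) :
    |y| ≤ (1 + R) * (1 + |(y - x) / ε|) := by
  have hy : y = x + ε * ((y - x) / ε) := by field_simp; ring
  have hyz : |y| ≤ |x| + ε * |(y - x) / ε| := by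
    conv_lhs => rw [hy]
    exact (abs_add_le _ _).trans_eq (by rw [abs_mul, abs_of_pos hε])
  nlinarith [abs_nonneg x, abs_nonneg ((y - x) / ε)]

theorem seminorm_scaledTranslate_le (φ : 𝓢(ℝ, ℝ)) {x ε R : ℝ} (hε : 0 < ε) (hε1 : ε ≤ 1)
    (hx : |x| ≤ R) {m : ℕ × ℕ} {k n : ℕ} (hk : k ≤ m.1) (hn : n ≤ m.2) :
    SchwartzMap.seminorm ℝ k n (scaledTranslate φ x ε hε) ≤
      (2 * (1 + R)) ^ m.1 * (Finset.Iic m).sup (schwartzSeminormFamily ℝ ℝ ℝ) φ *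
        ε⁻¹ ^ (m.2 + 1) := by
  have hR : 1 ≤ 1 + R := by linarith [abs_nonneg x]
  have hε' : 1 ≤ ε⁻¹ := (one_le_inv₀ hε).mpr hε1
  refine seminorm_le_bound' ℝ k n _ (by positivity) fun y => ?_
  rw [iteratedDeriv_scaledTranslate, Real.norm_eq_abs, abs_mul, abs_pow,
    abs_of_pos (inv_pos.mpr hε)]
  set z := (y - x) / ε
  have hφ := one_add_le_sup_seminorm_apply (𝕜 := ℝ) hk hn φ z
  rw [norm_iteratedFDeriv_eq_norm_iteratedDeriv, Real.norm_eq_abs, Real.norm_eq_abs] at hφ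
  calc |y| ^ k * (ε⁻¹ ^ (n + 1) * |iteratedDeriv n φ z|)
      ≤ ((1 + R) * (1 + |z|)) ^ k * (ε⁻¹ ^ (n + 1) * |iteratedDeriv n φ z|) := by
        gcongr; exact abs_le_mul_one_add_abs_sub_div hε hε1 hx
    _ = (1 + R) ^ k * ε⁻¹ ^ (n + 1) * ((1 + |z|) ^ k * |iteratedDeriv n φ z|) := by
        rw [mul_pow]; ring
    _ ≤ (1 + R) ^ m.1 * ε⁻¹ ^ (m.2 + 1) *
          (2 ^ m.1 * (Finset.Iic m).sup (schwartzSeminormFamily ℝ ℝ ℝ) φ) := by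
        gcongr (1 + R) ^ ?_ * ε⁻¹ ^ ?_ * ?_ <;> first | assumption | omega
    _ = _ := by rw [mul_pow]; ring

theorem sup_seminorm_scaledTranslate_le (φ : 𝓢(ℝ, ℝ)) {x ε R : ℝ} (hε : 0 < ε) (hε1 : ε ≤ 1)
    (hx : |x| ≤ R) (m : ℕ × ℕ) :
    (Finset.Iic m).sup (schwartzSeminormFamily ℝ ℝ ℝ) (scaledTranslate φ x ε hε) ≤
      (2 * (1 + R)) ^ m.1 * (Finset.Iic m).sup (schwartzSeminormFamily ℝ ℝ ℝ) φ *
        ε⁻¹ ^ (m.2 + 1) := by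
  have hR : 0 ≤ 1 + R := by linarith [abs_nonneg x]
  refine Seminorm.finset_sup_apply_le (by positivity) fun i hi => ?_
  exact seminorm_scaledTranslate_le φ hε hε1 hx (Finset.mem_Iic.mp hi).1 (Finset.mem_Iic.mp hi).2

/-- moderateness of embedded distributions. For a tempered distribution `u`,
a Schwartz function `φ` and a compact set `K ⊆ ℝ`, there are `N ∈ ℕ` and `C > 0` such that
`|u (y ↦ ε⁻¹ φ ((y - x)/ε))| ≤ C ε^(-N)` for all `ε ∈ (0,1]` and all `x ∈ K`. -/
theorem embedded_distribution_moderate (u : 𝓢(ℝ, ℝ) →L[ℝ] ℝ) (φ : 𝓢(ℝ, ℝ))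
    (K : Set ℝ) (hK : IsCompact K) :
    ∃ (N : ℕ) (C : ℝ), 0 < C ∧ ∀ ε : ℝ, ∀ hε : ε ∈ Set.Ioc (0 : ℝ) 1, ∀ x ∈ K,
      |u (scaledTranslate φ x ε hε.1)| ≤ C * ε ^ (-(N : ℤ)) := by
  obtain ⟨m, C, hC, hu⟩ := SchwartzMap.exists_norm_apply_le_sup_seminorm u
  obtain ⟨R, hR, hKR⟩ := hK.isBounded.exists_pos_norm_le
  set B := (2 * (1 + R)) ^ m.1 * (Finset.Iic m).sup (schwartzSeminormFamily ℝ ℝ ℝ) φ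
  refine ⟨m.2 + 1, C * (B + 1), by positivity, fun ε hε x hx => ?_⟩
  rw [zpow_neg, zpow_natCast, ← inv_pow]
  calc |u (scaledTranslate φ x ε hε.1)|
      ≤ C * (Finset.Iic m).sup (schwartzSeminormFamily ℝ ℝ ℝ) (scaledTranslate φ x ε hε.1) :=
        hu _
    _ ≤ C * (B * ε⁻¹ ^ (m.2 + 1)) := by
        gcongr C * ?_; exact sup_seminorm_scaledTranslate_le φ hε.1 hε.2 (hKR x hx) m
    _ ≤ C * (B + 1) * ε⁻¹ ^ (m.2 + 1) := by
        have hεN := pow_pos (inv_pos.mpr hε.1) (m.2 + 1)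
        rw [mul_assoc C]; gcongr C * (?_ * _); linarith
end

section
/- Let q ∈ ℕ, let f : ℝ → ℝ be of class C^{q+1}, and let φ : ℝ → ℝ be smooth with compact support satisfying ∫ φ(y) dy = 1 and ∫ y^j φ(y) dy = 0 for all 1 ≤ j ≤ q. Then for every compact set K ⊆ ℝ there is a constant C > 0 such that for all x ∈ K and all ε ∈ (0, 1], |∫ f(y) ε⁻¹ φ((y − x)/ε) dy − f(x)| ≤ C ε^{q+1}. (Negligibility of ι(f) − σ(f): the difference of the two embeddings of a smooth function vanishes to order q+1 when tested against kernels with q vanishing moments.) -/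
open MeasureTheory


lemma auxWithinEq {n m : ℕ} {f : ℝ → ℝ} (hf : ContDiff ℝ (n : ℕ) f) (hm : m ≤ n)
    {s : Set ℝ} (hs : UniqueDiffOn ℝ s) {x : ℝ} (hx : x ∈ s) :
    iteratedDerivWithin m f s x = iteratedDeriv m f x := by
  rw [iteratedDerivWithin_eq_iteratedFDerivWithin, iteratedDeriv_eq_iteratedFDeriv]
  congr 1
  have h := (contDiff_iff_ftaylorSeries.mp hf).hasFTaylorSeriesUpToOn s
  exact (h.eq_iteratedFDerivWithin_of_uniqueDiffOn (by exact_mod_cast hm) hs hx).symm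

open Nat in
lemma taylorOneSided {n : ℕ} {f : ℝ → ℝ} (hf : ContDiff ℝ (n + 1 : ℕ) f) {c t M : ℝ}
    (hct : c ≤ t) (hM : ∀ y ∈ Set.Icc c t, |iteratedDeriv (n + 1) f y| ≤ M) :
    |f t - ∑ k ∈ Finset.range (n + 1), ((k ! : ℝ)⁻¹ * (t - c) ^ k) * iteratedDeriv k f c| ≤
      M * (t - c) ^ (n + 1) / n ! := by
  rcases eq_or_lt_of_le hct with rfl | hlt
  · rw [sub_self, Finset.sum_eq_single_of_mem 0 (Finset.mem_range.mpr (Nat.succ_pos n))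
      (fun k _ hk0 => by simp [zero_pow hk0])]
    simp
  · have hu : UniqueDiffOn ℝ (Set.Icc c t) := uniqueDiffOn_Icc hlt
    have hfo : ContDiffOn ℝ ((n : ℕ∞) + 1) f (Set.Icc c t) := by
      exact_mod_cast hf.contDiffOn
    have hM' : ∀ y ∈ Set.Icc c t, ‖iteratedDerivWithin (n + 1) f (Set.Icc c t) y‖ ≤ M := by
      intro y hy
      rw [Real.norm_eq_abs, auxWithinEq hf le_rfl hu hy]
      exact hM y hy
    have key := taylor_mean_remainder_bound hct hfo (Set.right_mem_Icc.mpr hct) hM'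
    rw [taylor_within_apply] at key
    have e : ∀ k ∈ Finset.range (n + 1),
        ((k ! : ℝ)⁻¹ * (t - c) ^ k) • iteratedDerivWithin k f (Set.Icc c t) c
          = ((k ! : ℝ)⁻¹ * (t - c) ^ k) * iteratedDeriv k f c := by
      intro k hk
      rw [smul_eq_mul, auxWithinEq hf
        ((Nat.lt_succ_iff.mp (Finset.mem_range.mp hk)).trans (Nat.le_succ n)) hu
        (Set.left_mem_Icc.mpr hct)]
    rw [Finset.sum_congr rfl e, Real.norm_eq_abs] at key
    exact key

open Nat in
lemma taylorTwoSided {n : ℕ} {f : ℝ → ℝ} (hf : ContDiff ℝ (n + 1 : ℕ) f) (c t M : ℝ)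
    (hM : ∀ y ∈ Set.Icc (min c t) (max c t), |iteratedDeriv (n + 1) f y| ≤ M) :
    |f t - ∑ k ∈ Finset.range (n + 1), ((k ! : ℝ)⁻¹ * (t - c) ^ k) * iteratedDeriv k f c| ≤
      M * |t - c| ^ (n + 1) / n ! := by
  rcases le_total c t with hct | htc
  · rw [abs_of_nonneg (sub_nonneg.mpr hct)]
    exact taylorOneSided hf hct (by rwa [min_eq_left hct, max_eq_right hct] at hM)
  · rw [min_eq_right htc, max_eq_left htc] at hM
    set g : ℝ → ℝ := fun s => f (2 * c - s) with hg
    have hgc : ContDiff ℝ (n + 1 : ℕ) g := hf.comp (contDiff_const.sub contDiff_id)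
    have hgd : ∀ (m : ℕ) (a : ℝ),
        iteratedDeriv m g a = (-1 : ℝ) ^ m * iteratedDeriv m f (2 * c - a) := by
      intro m
      induction m with
      | zero => intro a; simp [hg]
      | succ m ih =>
        intro a
        rw [iteratedDeriv_succ, funext ih, iteratedDeriv_succ]
        rw [deriv_const_mul_field, deriv_comp_const_sub, pow_succ]
        ring
    have hct' : c ≤ 2 * c - t := by linarith
    have h2 : ∀ y ∈ Set.Icc c (2 * c - t), |iteratedDeriv (n + 1) g y| ≤ M := by
      intro y hy
      rw [hgd, abs_mul, abs_pow, abs_neg, abs_one, one_pow, one_mul]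
      exact hM _ ⟨by linarith [hy.2], by linarith [hy.1]⟩
    have key := taylorOneSided hgc hct' h2
    have e1 : g (2 * c - t) = f t := by simp [hg]
    have e2 : ∀ k ∈ Finset.range (n + 1),
        ((k ! : ℝ)⁻¹ * ((2 * c - t) - c) ^ k) * iteratedDeriv k g c
          = ((k ! : ℝ)⁻¹ * (t - c) ^ k) * iteratedDeriv k f c := by
      intro k _
      rw [hgd k c, show (2 * c - c) = c by ring,
        show ((k ! : ℝ)⁻¹ * ((2 * c - t) - c) ^ k) * ((-1 : ℝ) ^ k * iteratedDeriv k f c)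
          = ((k ! : ℝ)⁻¹ * (((2 * c - t) - c) * (-1)) ^ k) * iteratedDeriv k f c by
            rw [mul_pow]; ring,
        show ((2 * c - t) - c) * (-1 : ℝ) = t - c by ring]
    rw [e1, Finset.sum_congr rfl e2] at key
    rw [abs_of_nonpos (by linarith : t - c ≤ 0), show -(t - c) = (2 * c - t) - c by ring]
    exact key

/-- negligibility of `ι(f) - σ(f)`. Let `q ∈ ℕ`, let `f : ℝ → ℝ` be of
class `C^{q+1}` and let `φ : ℝ → ℝ` be smooth with compact support, with unit integral and
vanishing `j`-th moments for `1 ≤ j ≤ q`. Then for every compact `K ⊆ ℝ` there is `C > 0`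
such that for all `x ∈ K` and `ε ∈ (0,1]`,
`|∫ f y * ε⁻¹ φ ((y - x)/ε) dy - f x| ≤ C ε^{q+1}`. -/
theorem embeddings_difference_negligible (q : ℕ) (f φ : ℝ → ℝ)
    (hf : ContDiff ℝ (q + 1 : ℕ) f) (hφ : ContDiff ℝ (⊤ : ℕ∞) φ) (hφc : HasCompactSupport φ)
    (hunit : ∫ y, φ y = 1)
    (hmom : ∀ j : ℕ, 1 ≤ j → j ≤ q → ∫ y, y ^ j * φ y = 0)
    (K : Set ℝ) (hK : IsCompact K) :
    ∃ C : ℝ, 0 < C ∧ ∀ x ∈ K, ∀ ε ∈ Set.Ioc (0 : ℝ) 1,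
      |(∫ y, f y * (ε⁻¹ * φ ((y - x) / ε))) - f x| ≤ C * ε ^ (q + 1) := by
  obtain ⟨A, hA⟩ := hK.isBounded.exists_norm_le
  obtain ⟨L, hL⟩ := hφc.isBounded.exists_norm_le
  have hφcont : Continuous φ := hφ.continuous
  have hfc : Continuous f := hf.continuous
  have hcd : Continuous (iteratedDeriv (q + 1) f) :=
    hf.continuous_iteratedDeriv (q + 1) le_rfl
  obtain ⟨M0, hM0⟩ := (isCompact_Icc (a := -(A + L)) (b := A + L)).exists_bound_of_continuousOn
    hcd.continuousOn
  set M := max M0 0 with hM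
  have hMnn : 0 ≤ M := le_max_right _ _
  set I := ∫ u, |u| ^ (q + 1) * |φ u| with hI
  have hInn : 0 ≤ I := integral_nonneg fun u => by positivity
  have hqf : (0 : ℝ) < q.factorial := by positivity
  have hCpos : 0 < M / q.factorial * I + 1 := by
    have : 0 ≤ M / q.factorial * I := mul_nonneg (div_nonneg hMnn hqf.le) hInn
    linarith
  refine ⟨M / q.factorial * I + 1, hCpos, fun x hx ε hε => ?_⟩
  obtain ⟨hε0, hε1⟩ := hε
  have hεne : ε ≠ 0 := ne_of_gt hε0
  -- Step 1: change of variables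
  have step1 : (∫ y, f y * (ε⁻¹ * φ ((y - x) / ε))) = ∫ u, f (x + ε * u) * φ u := by
    have h1 : (fun y => f y * (ε⁻¹ * φ ((y - x) / ε)))
        = fun y => (fun z => f (z + x) * (ε⁻¹ * φ (z / ε))) (y - x) := by
      funext y; simp [sub_add_cancel]
    rw [h1, integral_sub_right_eq_self (fun z => f (z + x) * (ε⁻¹ * φ (z / ε))) x]
    have h2 : (fun z => f (z + x) * (ε⁻¹ * φ (z / ε)))
        = fun z => (fun u => f (x + ε * u) * (ε⁻¹ * φ u)) (z / ε) := by
      funext z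
      have : x + ε * (z / ε) = z + x := by
        rw [mul_comm, div_mul_cancel₀ _ hεne, add_comm]
      simp only [this]
    rw [h2, Measure.integral_comp_div (fun u => f (x + ε * u) * (ε⁻¹ * φ u)) ε]
    have h3 : (∫ u, f (x + ε * u) * (ε⁻¹ * φ u)) = ε⁻¹ * ∫ u, f (x + ε * u) * φ u := by
      rw [← integral_const_mul]
      congr 1; funext u; ring
    rw [h3, abs_of_pos hε0, smul_eq_mul, ← mul_assoc, mul_inv_cancel₀ hεne, one_mul]
  -- Step 2: the Taylor polynomial integrates to f x
  have hPint : ∀ k : ℕ, Integrable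
      (fun u => (((k.factorial : ℝ)⁻¹ * (ε * u) ^ k) * iteratedDeriv k f x) * φ u) := fun k =>
    (((continuous_const.mul ((continuous_const.mul continuous_id).pow k)).mul
      continuous_const).mul hφcont).integrable_of_hasCompactSupport hφc.mul_left
  have step2 : (∫ u, (∑ k ∈ Finset.range (q + 1),
      ((k.factorial : ℝ)⁻¹ * (ε * u) ^ k) * iteratedDeriv k f x) * φ u) = f x := by
    have h4 : (fun u => (∑ k ∈ Finset.range (q + 1),
        ((k.factorial : ℝ)⁻¹ * (ε * u) ^ k) * iteratedDeriv k f x) * φ u)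
        = fun u => ∑ k ∈ Finset.range (q + 1),
          (((k.factorial : ℝ)⁻¹ * (ε * u) ^ k) * iteratedDeriv k f x) * φ u := by
      funext u; rw [Finset.sum_mul]
    rw [h4, integral_finset_sum _ (fun k _ => hPint k)]
    have hterm : ∀ k ∈ Finset.range (q + 1),
        (∫ u, (((k.factorial : ℝ)⁻¹ * (ε * u) ^ k) * iteratedDeriv k f x) * φ u)
          = (((k.factorial : ℝ)⁻¹ * ε ^ k) * iteratedDeriv k f x) * ∫ u, u ^ k * φ u := by
      intro k _
      rw [← integral_const_mul]
      congr 1; funext u; rw [mul_pow]; ring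
    rw [Finset.sum_congr rfl hterm,
      Finset.sum_eq_single_of_mem 0 (Finset.mem_range.mpr (Nat.succ_pos q))
        (fun k hk hk0 => by
          rw [hmom k (Nat.one_le_iff_ne_zero.mpr hk0)
            (Nat.lt_succ_iff.mp (Finset.mem_range.mp hk)), mul_zero])]
    simp [hunit]
  -- Step 3: integrability
  have hint1 : Integrable (fun u => f (x + ε * u) * φ u) :=
    ((hfc.comp (continuous_const.add (continuous_const.mul continuous_id))).mul hφcont).integrable_of_hasCompactSupport hφc.mul_left
  have hint2 : Integrable (fun u => (∑ k ∈ Finset.range (q + 1),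
      ((k.factorial : ℝ)⁻¹ * (ε * u) ^ k) * iteratedDeriv k f x) * φ u) :=
    (((continuous_finset_sum _ fun k _ =>
      (continuous_const.mul ((continuous_const.mul continuous_id).pow k)).mul
        continuous_const)).mul hφcont).integrable_of_hasCompactSupport hφc.mul_left
  have hG : Integrable (fun u => (M / q.factorial * (ε ^ (q + 1) * |u| ^ (q + 1))) * |φ u|) :=
    ((continuous_const.mul (continuous_const.mul (continuous_abs.pow
      (q + 1)))).mul hφcont.abs).integrable_of_hasCompactSupport hφc.abs.mul_left
  rw [step1, ← step2, ← integral_sub hint1 hint2]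
  -- Step 4: pointwise bound
  have hbound : ∀ u, ‖f (x + ε * u) * φ u - (∑ k ∈ Finset.range (q + 1),
      ((k.factorial : ℝ)⁻¹ * (ε * u) ^ k) * iteratedDeriv k f x) * φ u‖
      ≤ (M / q.factorial * (ε ^ (q + 1) * |u| ^ (q + 1))) * |φ u| := by
    intro u
    rw [← sub_mul, Real.norm_eq_abs, abs_mul]
    by_cases hu : φ u = 0
    · simp [hu]
    · have hu' : u ∈ tsupport φ := subset_tsupport φ hu
      have hLu : |u| ≤ L := by simpa [Real.norm_eq_abs] using hL u hu'
      have hεu : |ε * u| ≤ L := by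
        rw [abs_mul, abs_of_pos hε0]
        calc ε * |u| ≤ 1 * |u| := by gcongr
          _ = |u| := one_mul _
          _ ≤ L := hLu
      have hxA : |x| ≤ A := by simpa [Real.norm_eq_abs] using hA x hx
      have hx' := abs_le.mp hxA
      have hεu' := abs_le.mp hεu
      have htay := taylorTwoSided hf x (x + ε * u) M (fun y hy => by
        have h5 : y ∈ Set.Icc (-(A + L)) (A + L) := by
          rcases le_total x (x + ε * u) with h | h
          · rw [min_eq_left h, max_eq_right h] at hy
            exact ⟨by linarith [hy.1], by linarith [hy.2]⟩
          · rw [min_eq_right h, max_eq_left h] at hy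
            exact ⟨by linarith [hy.1], by linarith [hy.2]⟩
        calc |iteratedDeriv (q + 1) f y| ≤ M0 := by
              simpa [Real.norm_eq_abs] using hM0 y h5
          _ ≤ M := le_max_left _ _)
      rw [add_sub_cancel_left] at htay
      have h6 : M * |ε * u| ^ (q + 1) / q.factorial = M / q.factorial * (ε ^ (q + 1) * |u| ^ (q + 1)) := by
        rw [abs_mul, abs_of_pos hε0, mul_pow]; ring
      rw [h6] at htay
      exact mul_le_mul_of_nonneg_right htay (abs_nonneg _)
  have hkey := norm_integral_le_of_norm_le hG (Filter.Eventually.of_forall hbound)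
  rw [Real.norm_eq_abs] at hkey
  refine hkey.trans ?_
  have h7 : (∫ u, (M / q.factorial * (ε ^ (q + 1) * |u| ^ (q + 1))) * |φ u|)
      = (M / q.factorial * ε ^ (q + 1)) * I := by
    rw [hI, ← integral_const_mul]
    congr 1; funext u; ring
  rw [h7]
  have h8 : (0 : ℝ) ≤ ε ^ (q + 1) := pow_nonneg hε0.le _
  nlinarith [mul_nonneg (div_nonneg hMnn hqf.le) hInn]
end
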